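/- Let t ≥ 0, b = 30t+29, a = 30t+31 be twin primes. If the least n ≥ 2 with H_a(n) − H_b(n) > 6 equals 17, then 30t+59 and 30t+53 are prime and 30t+61 is composite; in particular the seven numbers p, p+2, p+8, and the primes among {p+12, p+14, p+18, p+20} together with p+24, p+30 form one of the constellations (p, p+2, p+8, p+12, p+18, p+24, p+30), (p, p+2, p+8, p+14, p+20, p+24, p+30), or (p, p+2, p+8, p+14, p+18, p+24, p+30) of consecutive primes with p = 30t+29, and p+32 is composite. -/

import Mathlib

/-- The H-sequence with starting value `c`: `Hseq c 2 = c` and for `n ≥ 2`,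
`Hseq c (n+1)` is the least `m > Hseq c n` with (`m` prime ↔ `n+1` prime). -/
noncomputable def Hseq (c : ℕ) : ℕ → ℕ
  | 0 => c
  | 1 => c
  | 2 => c
  | n + 3 => sInf {m | Hseq c (n + 2) < m ∧ (Nat.Prime m ↔ Nat.Prime (n + 3))}
/-- A list of primes, strictly increasing, with no other primes in between. -/
def ConsecPrimes (l : List ℕ) : Prop :=
  l.Chain' (· < ·) ∧ (∀ x ∈ l, Nat.Prime x) ∧
    ∀ q, Nat.Prime q → l.headI ≤ q → q ≤ l.getLast! → q ∈ l

/-!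
Between `30t+29` and `30t+63` only offsets coprime to 30 can be prime, and `30t+29`, `30t+31`
are; so as long as both sequences stay below `30t+64` they are determined by the primality of
the eight numbers `30t+j`, `j ∈ {37, 41, 43, 47, 49, 53, 59, 61}`. Running the recursion on such
an eight-bit table gives a computable model that agrees with `Hseq` inside the window. Each of the
256 tables either makes the gap exceed 6 before index 17, or makes the two sequences meet before
then (after which they coincide forever, so the gap at 17 is 0), or has exactly the claimed shape.
-/

lemma exists_lt_prime_iff (x : ℕ) (P : Prop) : ∃ m, x < m ∧ (m.Prime ↔ P) := by
  by_cases hP : P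
  · obtain ⟨p, hxp, hp⟩ := Nat.exists_infinite_primes (x + 1)
    exact ⟨p, hxp, iff_of_true hp hP⟩
  · exact ⟨2 * (x + 2), by omega, iff_of_false (Nat.not_prime_mul (by omega) (by omega)) hP⟩

lemma not_prime_mul_add_of_dvd {m t j d : ℕ} (hdm : d ∣ m) (hdj : d ∣ j) (hd : 2 ≤ d)
    (hdj' : d < j) : ¬ (m * t + j).Prime :=
  Nat.not_prime_of_dvd_of_lt (dvd_add (hdm.mul_right t) hdj) hd
    (hdj'.trans_le (Nat.le_add_left _ _))

section Hseq

lemma Hseq_succ (c : ℕ) {n : ℕ} (hn : 2 ≤ n) :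
    Hseq c (n + 1) = sInf {m | Hseq c n < m ∧ (m.Prime ↔ (n + 1).Prime)} := by
  obtain ⟨k, rfl⟩ := Nat.exists_eq_add_of_le' hn
  rfl

lemma Hseq_succ_isLeast (c : ℕ) {n : ℕ} (hn : 2 ≤ n) :
    IsLeast {m | Hseq c n < m ∧ (m.Prime ↔ (n + 1).Prime)} (Hseq c (n + 1)) :=
  Hseq_succ c hn ▸ isLeast_csInf (exists_lt_prime_iff _ _)

lemma Hseq_succ_eq_of_forall_not_iff {c c' n : ℕ} (hn : 2 ≤ n) (hle : Hseq c n ≤ Hseq c' n)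
    (h : ∀ m, Hseq c n < m → m ≤ Hseq c' n → ¬(m.Prime ↔ (n + 1).Prime)) :
    Hseq c (n + 1) = Hseq c' (n + 1) := by
  rw [Hseq_succ c hn, Hseq_succ c' hn]
  congr 1
  ext m
  exact ⟨fun ⟨hm, hp⟩ => ⟨lt_of_not_ge fun hm' => h m hm hm' hp, hp⟩,
    fun ⟨hm, hp⟩ => ⟨hle.trans_lt hm, hp⟩⟩

lemma Hseq_eq_of_eq {c c' n : ℕ} (hn : 2 ≤ n) (heq : Hseq c n = Hseq c' n) {k : ℕ}
    (hk : n ≤ k) : Hseq c k = Hseq c' k := by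
  induction k, hk using Nat.le_induction with
  | base => exact heq
  | succ k hk ih => rw [Hseq_succ c (hn.trans hk), Hseq_succ c' (hn.trans hk), ih]

end Hseq

def seek (pat : ℕ → Bool) (b : Bool) : ℕ → ℕ → ℕ
  | 0, j => j
  | fuel + 1, j => if pat j = b then j else seek pat b fuel (j + 1)

section Seek

variable {pat : ℕ → Bool} {b : Bool}

lemma le_seek (fuel j : ℕ) : j ≤ seek pat b fuel j := by
  induction fuel generalizing j with
  | zero => exact le_rfl
  | succ fuel ih =>
    simp only [seek]
    split_ifs
    exacts [le_rfl, (ih (j + 1)).trans' (Nat.le_succ j)]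

lemma seek_le (fuel j : ℕ) : seek pat b fuel j ≤ j + fuel := by
  induction fuel generalizing j with
  | zero => exact le_rfl
  | succ fuel ih =>
    simp only [seek]
    split_ifs
    · omega
    · have := ih (j + 1)
      omega

lemma ne_of_lt_seek {fuel j i : ℕ} (hji : j ≤ i) (hi : i < seek pat b fuel j) :
    pat i ≠ b := by
  induction fuel generalizing j with
  | zero => exact absurd hi (not_lt.2 hji)
  | succ fuel ih =>
    simp only [seek] at hi
    split_ifs at hi with hj
    · omega
    · rcases hji.eq_or_lt with rfl | hji
      exacts [hj, ih hji hi]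

lemma seek_eq_of_lt {fuel j : ℕ} (h : seek pat b fuel j < j + fuel) :
    pat (seek pat b fuel j) = b := by
  induction fuel generalizing j with
  | zero => exact absurd h (lt_irrefl _)
  | succ fuel ih =>
    simp only [seek] at h ⊢
    split_ifs with hj
    · exact hj
    · rw [if_neg hj] at h
      exact ih (by omega)

end Seek

/-- The recursion of `Hseq` on offsets in a window `[x, hi)`, with `pat j` standing for the
primality of offset `j`; a value `≥ hi` means that the sequence has left the window. -/
def windowSeq (pat : ℕ → Bool) (hi x : ℕ) : ℕ → ℕ
  | n + 3 =>
    let y := windowSeq pat hi x (n + 2) + 1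
    seek pat (decide (n + 3).Prime) (hi - y) y
  | _ => x

section WindowSeq

variable {pat : ℕ → Bool} {hi x : ℕ}

lemma windowSeq_succ {n : ℕ} (hn : 2 ≤ n) :
    windowSeq pat hi x (n + 1) = seek pat (decide (n + 1).Prime)
      (hi - (windowSeq pat hi x n + 1)) (windowSeq pat hi x n + 1) := by
  obtain ⟨k, rfl⟩ := Nat.exists_eq_add_of_le' hn
  rfl

lemma windowSeq_lt_succ {n : ℕ} (hn : 2 ≤ n) :
    windowSeq pat hi x n < windowSeq pat hi x (n + 1) :=
  (windowSeq_succ hn).symm ▸ le_seek _ _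

lemma le_windowSeq {n : ℕ} (hn : 2 ≤ n) : x ≤ windowSeq pat hi x n := by
  induction n, hn using Nat.le_induction with
  | base => exact le_rfl
  | succ n hn ih => exact ih.trans (windowSeq_lt_succ hn).le

lemma windowSeq_succ_le {n : ℕ} (hn : 2 ≤ n) :
    windowSeq pat hi x (n + 1) ≤ max hi (windowSeq pat hi x n + 1) := by
  have := seek_le (pat := pat) (b := decide (n + 1).Prime)
    (hi - (windowSeq pat hi x n + 1)) (windowSeq pat hi x n + 1)
  rw [windowSeq_succ hn]
  omega

lemma pat_windowSeq_succ {n : ℕ} (hn : 2 ≤ n) (hw : windowSeq pat hi x (n + 1) < hi) :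
    pat (windowSeq pat hi x (n + 1)) = decide (n + 1).Prime := by
  rw [windowSeq_succ hn] at hw ⊢
  exact seek_eq_of_lt (by omega)

lemma pat_ne_of_windowSeq_lt {n i : ℕ} (hn : 2 ≤ n) (h₁ : windowSeq pat hi x n < i)
    (h₂ : i < windowSeq pat hi x (n + 1)) : pat i ≠ decide (n + 1).Prime := by
  rw [windowSeq_succ hn] at h₂
  exact ne_of_lt_seek h₁ h₂

variable {N : ℕ} (hpat : ∀ j, x ≤ j → j < hi → ((N + j).Prime ↔ pat j = true))
include hpat

lemma not_prime_iff_of_windowSeq_lt {n i : ℕ} (hn : 2 ≤ n) (h₁ : windowSeq pat hi x n < i)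
    (h₂ : i < windowSeq pat hi x (n + 1)) : ¬((N + i).Prime ↔ (n + 1).Prime) := by
  have := le_windowSeq (pat := pat) (hi := hi) (x := x) hn
  have := windowSeq_succ_le (pat := pat) (hi := hi) (x := x) hn
  rw [hpat i (by omega) (by omega)]
  exact fun hiff => pat_ne_of_windowSeq_lt hn h₁ h₂
    (Bool.eq_iff_iff.2 (hiff.trans decide_eq_true_iff.symm))

lemma windowSeq_succ_le_Hseq {n : ℕ} (hn : 2 ≤ n)
    (h : Hseq (N + x) n = N + windowSeq pat hi x n) :
    N + windowSeq pat hi x (n + 1) ≤ Hseq (N + x) (n + 1) := by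
  obtain ⟨⟨hlt, hiff⟩, -⟩ := Hseq_succ_isLeast (N + x) hn
  by_contra! hgt
  obtain ⟨i, hi⟩ : ∃ i, Hseq (N + x) (n + 1) = N + i :=
    ⟨_, (Nat.add_sub_cancel' (by omega)).symm⟩
  rw [hi] at hiff
  exact not_prime_iff_of_windowSeq_lt hpat hn (by omega) (by omega) hiff

lemma Hseq_eq_windowSeq {n : ℕ} (hn : 2 ≤ n) (hw : windowSeq pat hi x n < hi) :
    Hseq (N + x) n = N + windowSeq pat hi x n := by
  induction n, hn using Nat.le_induction with
  | base => rfl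
  | succ n hn ih =>
    have h := ih ((windowSeq_lt_succ hn).trans hw)
    have := windowSeq_lt_succ (pat := pat) (hi := hi) (x := x) hn
    have := le_windowSeq (pat := pat) (hi := hi) (x := x) hn
    refine le_antisymm ((Hseq_succ_isLeast (N + x) hn).2 ⟨by omega, ?_⟩)
      (windowSeq_succ_le_Hseq hpat hn h)
    rw [hpat _ (by omega) hw, pat_windowSeq_succ hn hw, decide_eq_true_iff]

end WindowSeq

/-- Before index `k`, either the gap between the sequences started at `x < x'` exceeds `d` (only
a lower bound is needed for the upper sequence, which may just have left the window), or no
admissible value lies between them, so that both take the same next value. -/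
def DivergesOrMerges (pat : ℕ → Bool) (hi x x' d k : ℕ) : Prop :=
  (∃ n < k - 1, 2 ≤ n ∧ windowSeq pat hi x' n < hi ∧ windowSeq pat hi x (n + 1) < hi ∧
    windowSeq pat hi x (n + 1) + d < windowSeq pat hi x' (n + 1)) ∨
  (∃ n < k - 1, 2 ≤ n ∧ windowSeq pat hi x' n < hi ∧
    windowSeq pat hi x n ≤ windowSeq pat hi x' n ∧
    windowSeq pat hi x' n < windowSeq pat hi x (n + 1))

instance {pat : ℕ → Bool} {hi x x' d k : ℕ} :
    Decidable (DivergesOrMerges pat hi x x' d k) := by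
  unfold DivergesOrMerges
  infer_instance

theorem not_divergesOrMerges {pat : ℕ → Bool} {N hi x x' d k : ℕ}
    (hpat : ∀ j, x ≤ j → j < hi → ((N + j).Prime ↔ pat j = true)) (hxx' : x ≤ x')
    (h : IsLeast {n | 2 ≤ n ∧ d < Hseq (N + x') n - Hseq (N + x) n} k) :
    ¬ DivergesOrMerges pat hi x x' d k := by
  have hpat' (j : ℕ) (hj : x' ≤ j) : j < hi → ((N + j).Prime ↔ pat j = true) :=
    hpat j (hxx'.trans hj)
  rintro (⟨n, hnk, hn, hw', hw, hgap⟩ | ⟨n, hnk, hn, hw', hle, hlt⟩)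
  · have := Hseq_eq_windowSeq hpat (by omega) hw
    have := windowSeq_succ_le_Hseq hpat' hn (Hseq_eq_windowSeq hpat' hn hw')
    have : k ≤ n + 1 := h.2 ⟨by omega, by omega⟩
    omega
  · have := Hseq_eq_windowSeq hpat hn (hle.trans_lt hw')
    have := Hseq_eq_windowSeq hpat' hn hw'
    have hmerge : Hseq (N + x) (n + 1) = Hseq (N + x') (n + 1) := by
      refine Hseq_succ_eq_of_forall_not_iff hn (by omega) fun m hm hm' => ?_
      obtain ⟨i, rfl⟩ : ∃ i, m = N + i := ⟨m - N, by omega⟩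
      exact not_prime_iff_of_windowSeq_lt hpat hn (by omega) (by omega)
    have := Hseq_eq_of_eq (by omega) hmerge (k := k) (by omega)
    have := h.1.2
    omega

def ListsPattern (pat : ℕ → Bool) (lo hi : ℕ) (l : List ℕ) : Prop :=
  l.IsChain (· < ·) ∧ (∀ j ∈ l, lo ≤ j ∧ j < hi) ∧
    ∀ j < hi, lo ≤ j → (pat j = true ↔ j ∈ l)

instance {pat : ℕ → Bool} {lo hi : ℕ} {l : List ℕ} :
    Decidable (ListsPattern pat lo hi l) := by
  unfold ListsPattern
  infer_instance

lemma ListsPattern.consecPrimes_map_add {pat : ℕ → Bool} {N lo hi : ℕ} {l : List ℕ}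
    (hpat : ∀ j, lo ≤ j → j < hi → ((N + j).Prime ↔ pat j = true))
    (hl : ListsPattern pat lo hi l) : ConsecPrimes (l.map (N + ·)) := by
  obtain ⟨hchain, hsub, hiff⟩ := hl
  have hprime (j : ℕ) (h₁ : lo ≤ j) (h₂ : j < hi) : (N + j).Prime ↔ j ∈ l :=
    (hpat j h₁ h₂).trans (hiff j h₂ h₁)
  refine ⟨(List.isChain_map _).2 (hchain.imp fun a b hab => by omega), ?_, ?_⟩
  · simp only [List.mem_map]
    rintro _ ⟨j, hj, rfl⟩
    exact (hprime j (hsub j hj).1 (hsub j hj).2).2 hj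
  · intro q hq hhead hlast
    cases l with
    | nil => exact absurd (Nat.le_zero.1 hlast ▸ hq) Nat.not_prime_zero
    | cons a l =>
      have := hsub a List.mem_cons_self
      have := hsub _ (List.getLast_mem (List.cons_ne_nil a l))
      rw [List.getLast!_eq_getLast?_getD, List.getLast?_map,
        List.getLast?_eq_some_getLast (List.cons_ne_nil _ _)] at hlast
      simp only [List.map_cons, List.headI_cons, Option.map_some, Option.getD_some]
        at hhead hlast
      obtain ⟨j, rfl⟩ : ∃ j, q = N + j := ⟨q - N, by omega⟩
      exact List.mem_map_of_mem ((hprime j (by omega) (by omega)).1 hq)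

/-- The primality of `30t + j` for `29 ≤ j < 64`: `30t + 29` and `30t + 31` are prime, the offsets
not coprime to 30 give composites, and the remaining eight offsets are free. -/
def primePattern (b37 b41 b43 b47 b49 b53 b59 b61 : Bool) : ℕ → Bool
  | 29 | 31 => true
  | 37 => b37 | 41 => b41 | 43 => b43 | 47 => b47
  | 49 => b49 | 53 => b53 | 59 => b59 | 61 => b61
  | _ => false

lemma primePattern_spec {t : ℕ} (hb : (30 * t + 29).Prime) (ha : (30 * t + 31).Prime) :
    ∀ j, 29 ≤ j → j < 64 → ((30 * t + j).Prime ↔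
      primePattern (30 * t + 37).Prime (30 * t + 41).Prime (30 * t + 43).Prime
        (30 * t + 47).Prime (30 * t + 49).Prime (30 * t + 53).Prime (30 * t + 59).Prime
        (30 * t + 61).Prime j = true) := by
  intro j h₁ h₂
  interval_cases j <;>
    simp only [primePattern, decide_eq_true_eq, hb, ha, Bool.false_eq_true, iff_false]
  all_goals first
    | apply not_prime_mul_add_of_dvd (d := 2) <;> decide
    | apply not_prime_mul_add_of_dvd (d := 3) <;> decide
    | apply not_prime_mul_add_of_dvd (d := 5) <;> decide

theorem divergesOrMerges_or_constellation (b37 b41 b43 b47 b49 b53 b59 b61 : Bool) :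
    DivergesOrMerges (primePattern b37 b41 b43 b47 b49 b53 b59 b61) 64 29 31 6 17 ∨
      (b59 = true ∧ b53 = true ∧ b61 = false ∧
        (ListsPattern (primePattern b37 b41 b43 b47 b49 b53 b59 b61) 29 60
            [29, 31, 37, 41, 47, 53, 59] ∨
          ListsPattern (primePattern b37 b41 b43 b47 b49 b53 b59 b61) 29 60
            [29, 31, 37, 43, 49, 53, 59] ∨
          ListsPattern (primePattern b37 b41 b43 b47 b49 b53 b59 b61) 29 60
            [29, 31, 37, 43, 47, 53, 59])) := by
  revert b37 b41 b43 b47 b49 b53 b59 b61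
  decide

theorem stmt16 (t : ℕ) (hb : Nat.Prime (30*t+29)) (ha : Nat.Prime (30*t+31))
    (h : IsLeast {n | 2 ≤ n ∧ 6 < Hseq (30*t+31) n - Hseq (30*t+29) n} 17) :
    Nat.Prime (30*t+59) ∧ Nat.Prime (30*t+53) ∧ ¬ Nat.Prime (30*t+61) ∧
      (ConsecPrimes [30*t+29, 30*t+31, 30*t+37, 30*t+41, 30*t+47, 30*t+53, 30*t+59] ∨
        ConsecPrimes [30*t+29, 30*t+31, 30*t+37, 30*t+43, 30*t+49, 30*t+53, 30*t+59] ∨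
        ConsecPrimes [30*t+29, 30*t+31, 30*t+37, 30*t+43, 30*t+47, 30*t+53, 30*t+59]) := by
  have hpat := primePattern_spec hb ha
  have hpat' (j : ℕ) (h₁ : 29 ≤ j) (h₂ : j < 60) := hpat j h₁ (by omega)
  obtain hexit | ⟨h59, h53, h61, hl | hl | hl⟩ :=
    divergesOrMerges_or_constellation _ _ _ _ _ _ _ _
  · exact absurd hexit (not_divergesOrMerges hpat (by norm_num) h)
  all_goals refine ⟨of_decide_eq_true h59, of_decide_eq_true h53, of_decide_eq_false h61, ?_⟩
  exacts [Or.inl (hl.consecPrimes_map_add hpat'), Or.inr (Or.inl (hl.consecPrimes_map_add hpat')),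
    Or.inr (Or.inr (hl.consecPrimes_map_add hpat'))]
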